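/- arXiv:1901.04153 — 5 statements merged into one kernel-verified Lean document; each statement's English description precedes it below -/
import Mathlib

section
/- If player 1 has a 2-strategy mixed strategy (support of size at most 2) that guarantees utility at least u with probability strictly greater than 1/2 against every pure strategy of player 2, then one of the two pure strategies in its support guarantees utility at least u against every pure strategy of player 2 (i.e., there is a (u,1)-maximin pure strategy). -/
/-- If player 1 has a 2-strategy mixed strategy that guarantees utility at least `u`
with probability strictly greater than `1/2` against every pure strategy of player 2,
then one of the two pure strategies in its support guarantees utility at least `u`
against every pure strategy of player 2. -/
theorem maximin_two_strategy_high_prob_implies_pure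
    {S1 S2 : Type*} (U : S1 → S2 → ℝ) (x x' : S1) (q u p : ℝ)
    (hq0 : 0 ≤ q) (hq1 : q ≤ 1) (hp : 1 / 2 < p)
    (h : ∀ y : S2,
      p ≤ (if u ≤ U x y then q else 0) + (if u ≤ U x' y then 1 - q else 0)) :
    (∀ y : S2, u ≤ U x y) ∨ (∀ y : S2, u ≤ U x' y) := by
  by_contra hc
  push_neg at hc
  obtain ⟨⟨y1, hy1⟩, ⟨y2, hy2⟩⟩ := hc
  have h1 := h y1
  have h2 := h y2
  rw [if_neg (not_le.mpr hy1)] at h1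
  rw [if_neg (not_le.mpr hy2)] at h2
  split_ifs at h1 h2 <;> linarith
end

section
/- A pure strategy x of player 1 in continuous Colonel Blotto guarantees a payoff of at least u against every pure strategy of player 2 if and only if for every set S of battlefields with ∑_{i∉S} w_i < u, we have ∑_{i∈S} x_i > m. -/
/-- Player 1's utility in continuous Colonel Blotto: the total weight of
battlefields where he places strictly more troops than player 2. -/
noncomputable def blottoUtil {k : ℕ} (w : Fin k → ℝ) (x y : Fin k → ℝ) : ℝ :=
  ∑ i ∈ Finset.univ.filter (fun i => y i < x i), w i

/-- A pure strategy `x` of player 1 guarantees a payoff of at least `u` against every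
pure strategy of player 2 iff for every set `S` of battlefields with
`∑_{i ∉ S} w i < u` we have `∑_{i ∈ S} x i > m`. -/
theorem pure_maximin_iff_critical_sets
    {k : ℕ} (w : Fin k → ℝ) (n m u : ℝ) (hw : ∀ i, 0 < w i) (hm : 0 ≤ m)
    (x : Fin k → ℝ) (hx : ∀ i, 0 ≤ x i) (hxn : ∑ i, x i ≤ n) :
    (∀ y : Fin k → ℝ, (∀ i, 0 ≤ y i) → (∑ i, y i ≤ m) → u ≤ blottoUtil w x y) ↔
    (∀ S : Finset (Fin k), (∑ i ∈ Sᶜ, w i) < u → m < ∑ i ∈ S, x i) := by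
  constructor
  · intro h S hS
    by_contra hle
    push_neg at hle
    set y : Fin k → ℝ := fun i => if i ∈ S then x i else 0 with hy
    have hy0 : ∀ i, 0 ≤ y i := by
      intro i
      simp only [hy]
      split
      · exact hx i
      · exact le_rfl
    have hysum : ∑ i, y i ≤ m := by
      have : ∑ i, y i = ∑ i ∈ S, x i := by
        simp [hy, Finset.sum_ite_mem]
      rw [this]; exact hle
    have hu := h y hy0 hysum
    have hsub : Finset.univ.filter (fun i => y i < x i) ⊆ Sᶜ := by
      intro i hi
      simp only [Finset.mem_filter, hy] at hi
      simp only [Finset.mem_compl]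
      intro hiS
      simp [hiS] at hi
    have hle2 : blottoUtil w x y ≤ ∑ i ∈ Sᶜ, w i := by
      apply Finset.sum_le_sum_of_subset_of_nonneg hsub
      intro i _ _; exact (hw i).le
    linarith [hu, hle2, hS]
  · intro h y hy0 hysum
    by_contra hu
    push_neg at hu
    set T : Finset (Fin k) := Finset.univ.filter (fun i => y i < x i) with hT
    have hS := h Tᶜ (by rw [compl_compl]; exact hu)
    have hxy : ∑ i ∈ Tᶜ, x i ≤ ∑ i ∈ Tᶜ, y i := by
      apply Finset.sum_le_sum
      intro i hi
      simp only [hT, Finset.mem_compl, Finset.mem_filter, Finset.mem_univ,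
        true_and, not_lt] at hi
      exact hi
    have hyT : ∑ i ∈ Tᶜ, y i ≤ ∑ i, y i := by
      apply Finset.sum_le_sum_of_subset_of_nonneg (Finset.subset_univ _)
      intro i _ _; exact hy0 i
    linarith
end

section
/- Two pure strategies x and x' of player 1 in continuous Colonel Blotto both fail against some pure strategy of player 2 simultaneously obtaining utility at least u if and only if there exists a critical tuple ⟨L1, L2, L12⟩ (three pairwise disjoint sets of battlefields with ∑_{i∉L1∪L12} w_i < u and ∑_{i∉L2∪L12} w_i < u) such that ∑_{i∈L1} x_i + ∑_{i∈L2} x'_i + ∑_{i∈L12} max(x_i, x'_i) ≤ m. Equivalently: for every pure strategy y of player 2, at least one of x, x' obtains utility ≥ u against y if and only if for every critical tuple, ∑_{i∈L1} x_i + ∑_{i∈L2} x'_i + ∑_{i∈L12} max(x_i, x'_i) > m. -/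
/-- Against every pure strategy `y` of player 2, at least one of `x, x'` obtains utility
at least `u` if and only if for every critical tuple `⟨L1, L2, L12⟩` (pairwise disjoint
sets with `∑_{i ∉ L1 ∪ L12} w i < u` and `∑_{i ∉ L2 ∪ L12} w i < u`) we have
`∑_{i ∈ L1} x i + ∑_{i ∈ L2} x' i + ∑_{i ∈ L12} max (x i) (x' i) > m`. -/
theorem two_strategy_maximin_iff_critical_tuples
    {k : ℕ} (w : Fin k → ℝ) (n m u : ℝ) (hw : ∀ i, 0 < w i) (hm : 0 ≤ m)
    (x x' : Fin k → ℝ) (hx : ∀ i, 0 ≤ x i) (hx' : ∀ i, 0 ≤ x' i)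
    (hxn : ∑ i, x i ≤ n) (hx'n : ∑ i, x' i ≤ n) :
    (∀ y : Fin k → ℝ, (∀ i, 0 ≤ y i) → (∑ i, y i ≤ m) →
        u ≤ blottoUtil w x y ∨ u ≤ blottoUtil w x' y) ↔
    (∀ L1 L2 L12 : Finset (Fin k),
        Disjoint L1 L2 → Disjoint L1 L12 → Disjoint L2 L12 →
        (∑ i ∈ (L1 ∪ L12)ᶜ, w i) < u → (∑ i ∈ (L2 ∪ L12)ᶜ, w i) < u →
        m < ∑ i ∈ L1, x i + ∑ i ∈ L2, x' i + ∑ i ∈ L12, max (x i) (x' i)) := by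
  constructor
  · intro h L1 L2 L12 h12 hA hB hu1 hu2
    by_contra hle
    push_neg at hle
    set y : Fin k → ℝ := fun i =>
      if i ∈ L1 then x i else if i ∈ L2 then x' i else
        if i ∈ L12 then max (x i) (x' i) else 0 with hy
    have hy0 : ∀ i, 0 ≤ y i := by
      intro i
      simp only [hy]
      split_ifs
      · exact hx i
      · exact hx' i
      · exact le_max_of_le_left (hx i)
      · exact le_refl 0
    have hd : Disjoint (L1 ∪ L2) L12 := Finset.disjoint_union_left.mpr ⟨hA, hB⟩
    have hsum : ∑ i, y i =
        ∑ i ∈ L1, x i + ∑ i ∈ L2, x' i + ∑ i ∈ L12, max (x i) (x' i) := by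
      have hsub : ∑ i, y i = ∑ i ∈ L1 ∪ L2 ∪ L12, y i := by
        rw [← Finset.sum_subset (Finset.subset_univ _)]
        intro i _ hi
        simp only [Finset.mem_union, not_or] at hi
        simp only [hy, if_neg hi.1.1, if_neg hi.1.2, if_neg hi.2]
      rw [hsub, Finset.sum_union hd, Finset.sum_union h12]
      congr 1
      · congr 1
        · apply Finset.sum_congr rfl
          intro i hi
          simp only [hy, if_pos hi]
        · apply Finset.sum_congr rfl
          intro i hi
          have h1 : i ∉ L1 := Finset.disjoint_right.mp h12 hi
          simp only [hy, if_neg h1, if_pos hi]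
      · apply Finset.sum_congr rfl
        intro i hi
        have h1 : i ∉ L1 := Finset.disjoint_right.mp hA hi
        have h2 : i ∉ L2 := Finset.disjoint_right.mp hB hi
        simp only [hy, if_neg h1, if_neg h2, if_pos hi]
    have hub1 : blottoUtil w x y ≤ ∑ i ∈ (L1 ∪ L12)ᶜ, w i := by
      apply Finset.sum_le_sum_of_subset_of_nonneg
      · intro i hi
        simp only [Finset.mem_filter, Finset.mem_univ, true_and] at hi
        simp only [Finset.mem_compl, Finset.mem_union, not_or]
        constructor
        · intro h1
          simp only [hy, if_pos h1] at hi
          exact absurd hi (lt_irrefl _)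
        · intro h12'
          have h1 : i ∉ L1 := Finset.disjoint_right.mp hA h12'
          have h2 : i ∉ L2 := Finset.disjoint_right.mp hB h12'
          simp only [hy, if_neg h1, if_neg h2, if_pos h12'] at hi
          exact absurd hi (not_lt.mpr (le_max_left _ _))
      · intro i _ _
        exact (hw i).le
    have hub2 : blottoUtil w x' y ≤ ∑ i ∈ (L2 ∪ L12)ᶜ, w i := by
      apply Finset.sum_le_sum_of_subset_of_nonneg
      · intro i hi
        simp only [Finset.mem_filter, Finset.mem_univ, true_and] at hi
        simp only [Finset.mem_compl, Finset.mem_union, not_or]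
        constructor
        · intro h2
          have h1 : i ∉ L1 := Finset.disjoint_right.mp h12 h2
          simp only [hy, if_neg h1, if_pos h2] at hi
          exact absurd hi (lt_irrefl _)
        · intro h12'
          have h1 : i ∉ L1 := Finset.disjoint_right.mp hA h12'
          have h2 : i ∉ L2 := Finset.disjoint_right.mp hB h12'
          simp only [hy, if_neg h1, if_neg h2, if_pos h12'] at hi
          exact absurd hi (not_lt.mpr (le_max_right _ _))
      · intro i _ _
        exact (hw i).le
    rcases h y hy0 (by rw [hsum]; exact hle) with hc | hc
    · exact absurd (hc.trans hub1) (not_le.mpr hu1)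
    · exact absurd (hc.trans hub2) (not_le.mpr hu2)
  · intro h y hy0 hym
    by_contra hc
    push_neg at hc
    obtain ⟨h1, h2⟩ := hc
    set L1 : Finset (Fin k) :=
      Finset.univ.filter (fun i => x i ≤ y i ∧ y i < x' i) with hL1
    set L2 : Finset (Fin k) :=
      Finset.univ.filter (fun i => x' i ≤ y i ∧ y i < x i) with hL2
    set L12 : Finset (Fin k) :=
      Finset.univ.filter (fun i => x i ≤ y i ∧ x' i ≤ y i) with hL12
    have hd12 : Disjoint L1 L2 := by
      rw [Finset.disjoint_left]
      intro i hi hj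
      simp only [hL1, hL2, Finset.mem_filter, Finset.mem_univ, true_and] at hi hj
      linarith [hi.1, hi.2, hj.1, hj.2]
    have hdA : Disjoint L1 L12 := by
      rw [Finset.disjoint_left]
      intro i hi hj
      simp only [hL1, hL12, Finset.mem_filter, Finset.mem_univ, true_and] at hi hj
      linarith [hi.2, hj.2]
    have hdB : Disjoint L2 L12 := by
      rw [Finset.disjoint_left]
      intro i hi hj
      simp only [hL2, hL12, Finset.mem_filter, Finset.mem_univ, true_and] at hi hj
      linarith [hi.2, hj.1]
    have hset1 : (L1 ∪ L12)ᶜ = Finset.univ.filter (fun i => y i < x i) := by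
      ext i
      simp only [Finset.mem_compl, Finset.mem_union, Finset.mem_filter, Finset.mem_univ,
        true_and, not_or, hL1, hL12]
      constructor
      · intro hne
        by_contra hge
        push_neg at hge
        rcases le_or_gt (x' i) (y i) with h' | h'
        · exact hne.2 ⟨hge, h'⟩
        · exact hne.1 ⟨hge, h'⟩
      · intro hlt
        constructor <;> rintro ⟨ha, _⟩ <;> linarith
    have hset2 : (L2 ∪ L12)ᶜ = Finset.univ.filter (fun i => y i < x' i) := by
      ext i
      simp only [Finset.mem_compl, Finset.mem_union, Finset.mem_filter, Finset.mem_univ,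
        true_and, not_or, hL2, hL12]
      constructor
      · intro hne
        by_contra hge
        push_neg at hge
        rcases le_or_gt (x i) (y i) with h' | h'
        · exact hne.2 ⟨h', hge⟩
        · exact hne.1 ⟨hge, h'⟩
      · intro hlt
        constructor <;> rintro ⟨ha, hb⟩ <;> linarith
    have hkey := h L1 L2 L12 hd12 hdA hdB
      (by rw [hset1]; exact h1) (by rw [hset2]; exact h2)
    have hcost : ∑ i ∈ L1, x i + ∑ i ∈ L2, x' i + ∑ i ∈ L12, max (x i) (x' i)
        ≤ ∑ i, y i := by
      have e1 : ∑ i ∈ L1, x i ≤ ∑ i ∈ L1, y i := by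
        apply Finset.sum_le_sum
        intro i hi
        simp only [hL1, Finset.mem_filter, Finset.mem_univ, true_and] at hi
        exact hi.1
      have e2 : ∑ i ∈ L2, x' i ≤ ∑ i ∈ L2, y i := by
        apply Finset.sum_le_sum
        intro i hi
        simp only [hL2, Finset.mem_filter, Finset.mem_univ, true_and] at hi
        exact hi.1
      have e3 : ∑ i ∈ L12, max (x i) (x' i) ≤ ∑ i ∈ L12, y i := by
        apply Finset.sum_le_sum
        intro i hi
        simp only [hL12, Finset.mem_filter, Finset.mem_univ, true_and] at hi
        exact max_le hi.1 hi.2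
      have hd : Disjoint (L1 ∪ L2) L12 := Finset.disjoint_union_left.mpr ⟨hdA, hdB⟩
      calc ∑ i ∈ L1, x i + ∑ i ∈ L2, x' i + ∑ i ∈ L12, max (x i) (x' i)
          ≤ ∑ i ∈ L1, y i + ∑ i ∈ L2, y i + ∑ i ∈ L12, y i := by
            gcongr
        _ = ∑ i ∈ L1 ∪ L2 ∪ L12, y i := by
            rw [Finset.sum_union hd, Finset.sum_union hd12]
        _ ≤ ∑ i, y i :=
            Finset.sum_le_sum_of_subset_of_nonneg (Finset.subset_univ _)
              (fun i _ _ => hy0 i)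
    linarith
end

section
/- In discrete Colonel Blotto, if player 1 has a (u,1)-maximin pure strategy, then he also has a (u,1)-maximin pure strategy x such that for any two battlefields i, j with w_i = w_j, we have |x_i − x_j| ≤ 1. -/
/-- Player 1's utility in discrete Colonel Blotto (ties go to player 2). -/
noncomputable def dUtil {k : ℕ} (w : Fin k → ℝ) (x y : Fin k → ℕ) : ℝ :=
  ∑ i ∈ Finset.univ.filter (fun i => y i < x i), w i

lemma dUtil_eq {k : ℕ} (w : Fin k → ℝ) (x y : Fin k → ℕ) :
    dUtil w x y = ∑ i, if y i < x i then w i else 0 := by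
  rw [dUtil, Finset.sum_filter]

lemma sum_split {k : ℕ} {M : Type*} [AddCommMonoid M] (f : Fin k → M) {i j : Fin k}
    (hij : i ≠ j) :
    ∑ t, f t = f i + (f j + ∑ t ∈ (Finset.univ.erase i).erase j, f t) := by
  rw [Finset.add_sum_erase _ f (Finset.mem_erase.2 ⟨hij.symm, Finset.mem_univ j⟩),
    Finset.add_sum_erase _ f (Finset.mem_univ i)]

lemma compare {k : ℕ} (w : Fin k → ℝ) (m : ℕ) (u : ℝ) (x : Fin k → ℕ) {i j : Fin k}
    (hij : i ≠ j)
    (hmax : ∀ y : Fin k → ℕ, (∑ t, y t ≤ m) → u ≤ dUtil w x y)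
    (x' y : Fin k → ℕ) (p q : ℕ)
    (hpq : p + q = y i + y j)
    (hx'eq : ∀ t, t ≠ i → t ≠ j → x' t = x t)
    (hineq : (if p < x i then w i else 0) + (if q < x j then w j else 0) ≤
      (if y i < x' i then w i else 0) + (if y j < x' j then w j else 0))
    (hy : ∑ t, y t ≤ m) : u ≤ dUtil w x' y := by
  set y' : Fin k → ℕ := Function.update (Function.update y i p) j q with hy'
  have hy'i : y' i = p := by simp [hy', Function.update_apply, hij]
  have hy'j : y' j = q := by simp [hy', Function.update_apply]
  have hy't : ∀ t, t ≠ i → t ≠ j → y' t = y t := by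
    intro t ht1 ht2; simp [hy', Function.update_apply, ht1, ht2]
  have hsum : ∑ t, y' t = ∑ t, y t := by
    have hrest : ∑ t ∈ (Finset.univ.erase i).erase j, y' t
        = ∑ t ∈ (Finset.univ.erase i).erase j, y t := by
      apply Finset.sum_congr rfl
      intro t ht
      simp only [Finset.mem_erase] at ht
      exact hy't t ht.2.1 ht.1
    rw [sum_split y' hij, sum_split y hij, hy'i, hy'j, hrest]
    omega
  have h1 := hmax y' (by rw [hsum]; exact hy)
  refine h1.trans ?_
  rw [dUtil_eq, dUtil_eq, sum_split (fun t => if y' t < x t then w t else 0) hij,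
    sum_split (fun t => if y t < x' t then w t else 0) hij]
  simp only [hy'i, hy'j]
  have hR : ∑ t ∈ (Finset.univ.erase i).erase j, (if y' t < x t then w t else 0)
      = ∑ t ∈ (Finset.univ.erase i).erase j, (if y t < x' t then w t else 0) := by
    apply Finset.sum_congr rfl
    intro t ht
    simp only [Finset.mem_erase] at ht
    rw [hy't t ht.2.1 ht.1, hx'eq t ht.2.1 ht.1]
  rw [hR]
  have h2 : (if y' i < x i then w i else 0) = (if p < x i then w i else 0) := by rw [hy'i]
  have h3 : (if y' j < x j then w j else 0) = (if q < x j then w j else 0) := by rw [hy'j]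
  linarith [hineq, h2, h3]


lemma swap_step {k : ℕ} (w : Fin k → ℝ) (m : ℕ) (u : ℝ) (x : Fin k → ℕ)
    {i j : Fin k} (hij : i ≠ j) (hw : w i = w j) (hwpos : 0 ≤ w i)
    (hx : x j + 2 ≤ x i)
    (hmax : ∀ y : Fin k → ℕ, (∑ t, y t ≤ m) → u ≤ dUtil w x y) :
    ∀ y : Fin k → ℕ, (∑ t, y t ≤ m) →
      u ≤ dUtil w (Function.update (Function.update x i (x i - 1)) j (x j + 1)) y := by
  intro y hy
  set x' : Fin k → ℕ := Function.update (Function.update x i (x i - 1)) j (x j + 1) with hx'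
  have hx'i : x' i = x i - 1 := by simp [hx', Function.update_apply, hij]
  have hx'j : x' j = x j + 1 := by simp [hx', Function.update_apply]
  have hx't : ∀ t, t ≠ i → t ≠ j → x' t = x t := by
    intro t ht1 ht2; simp [hx', Function.update_apply, ht1, ht2]
  by_cases h1 : x i - 1 ≤ y i
  · by_cases h2 : x j + 1 ≤ y j
    · -- case A : x' wins neither; respond with (x i, y i + y j - x i)
      apply compare w m u x hij hmax x' y (x i) (y i + y j - x i) (by omega) hx't _ hy
      rw [hx'i, hx'j]
      have c1 : ¬ (x i < x i) := by omega
      have c2 : ¬ (y i + y j - x i < x j) := by omega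
      have c3 : ¬ (y i < x i - 1) := by omega
      have c4 : ¬ (y j < x j + 1) := by omega
      simp [c1, c2, c3, c4]
    · -- case B : swap y i and y j
      apply compare w m u x hij hmax x' y (y j) (y i) (by omega) hx't _ hy
      rw [hx'i, hx'j]
      have c2 : ¬ (y i < x j) := by omega
      have c3 : ¬ (y i < x i - 1) := by omega
      have c4 : y j < x j + 1 := by omega
      simp only [c2, c3, c4, if_false, if_true, add_zero, zero_add]
      split_ifs with h
      · linarith
      · linarith
  · -- case C : keep y
    apply compare w m u x hij hmax x' y (y i) (y j) (by omega) hx't _ hy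
    rw [hx'i, hx'j]
    have c1 : y i < x i := by omega
    have c3 : y i < x i - 1 := by omega
    simp only [c1, c3, if_true]
    split_ifs with ha hb hb
    · rfl
    · omega
    · linarith
    · rfl

lemma balance_main {k : ℕ} (w : Fin k → ℝ) (m : ℕ) (u : ℝ) :
    ∀ N : ℕ, ∀ x : Fin k → ℕ, (∑ t, (x t)^2 ≤ N) →
    (∀ y : Fin k → ℕ, (∑ t, y t ≤ m) → u ≤ dUtil w x y) →
    (∀ t, w t ≤ 0 → x t = 0) →
    ∃ x' : Fin k → ℕ, (∑ t, x' t ≤ ∑ t, x t) ∧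
      (∀ y : Fin k → ℕ, (∑ t, y t ≤ m) → u ≤ dUtil w x' y) ∧
      ∀ i j, w i = w j → ((x' i : ℤ) - (x' j : ℤ)).natAbs ≤ 1 := by
  intro N
  induction N using Nat.strong_induction_on with
  | _ N IH =>
    intro x hN hmax hz
    by_cases hb : ∀ i j, w i = w j → ((x i : ℤ) - (x j : ℤ)).natAbs ≤ 1
    · exact ⟨x, le_rfl, hmax, hb⟩
    · push_neg at hb
      obtain ⟨i, j, hw, hgt⟩ := hb
      have key : ∀ i j : Fin k, w i = w j → x j + 2 ≤ x i →
          ∃ x' : Fin k → ℕ, (∑ t, x' t ≤ ∑ t, x t) ∧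
            (∀ y : Fin k → ℕ, (∑ t, y t ≤ m) → u ≤ dUtil w x' y) ∧
            ∀ i j, w i = w j → ((x' i : ℤ) - (x' j : ℤ)).natAbs ≤ 1 := by
        intro i j hw hgt
        have hij : i ≠ j := by rintro rfl; omega
        have hwi : 0 < w i := by
          by_contra hc
          have := hz i (le_of_not_gt hc)
          omega
        set x' : Fin k → ℕ := Function.update (Function.update x i (x i - 1)) j (x j + 1)
          with hx'
        have hx'i : x' i = x i - 1 := by simp [hx', Function.update_apply, hij]
        have hx'j : x' j = x j + 1 := by simp [hx', Function.update_apply]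
        have hx't : ∀ t, t ≠ i → t ≠ j → x' t = x t := by
          intro t ht1 ht2; simp [hx', Function.update_apply, ht1, ht2]
        have hrest : ∀ f : ℕ → ℕ, ∑ t ∈ (Finset.univ.erase i).erase j, f (x' t)
            = ∑ t ∈ (Finset.univ.erase i).erase j, f (x t) := by
          intro f
          apply Finset.sum_congr rfl
          intro t ht
          simp only [Finset.mem_erase] at ht
          rw [hx't t ht.2.1 ht.1]
        have hsum : ∑ t, x' t = ∑ t, x t := by
          rw [sum_split x' hij, sum_split x hij, hx'i, hx'j, hrest (fun a => a)]
          omega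
        have hsq : ∑ t, (x' t)^2 < N := by
          have : ∑ t, (x' t)^2 < ∑ t, (x t)^2 := by
            rw [sum_split (fun t => (x' t)^2) hij, sum_split (fun t => (x t)^2) hij]
            simp only [hx'i, hx'j]
            have : ∑ t ∈ (Finset.univ.erase i).erase j, (x' t)^2
                = ∑ t ∈ (Finset.univ.erase i).erase j, (x t)^2 := hrest (fun a => a^2)
            rw [this]
            have h1 : (x i - 1)^2 + (x j + 1)^2 < (x i)^2 + (x j)^2 := by
              obtain ⟨a, ha⟩ : ∃ a, x i = a + 1 := ⟨x i - 1, by omega⟩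
              rw [ha]
              simp only [Nat.add_sub_cancel]
              have hab : x j + 1 ≤ a := by omega
              nlinarith [hab]
            omega
          omega
        have hmax' := swap_step w m u x hij hw hwi.le hgt hmax
        have hz' : ∀ t, w t ≤ 0 → x' t = 0 := by
          intro t ht
          rcases eq_or_ne t i with rfl | hti
          · linarith
          rcases eq_or_ne t j with rfl | htj
          · rw [← hw] at ht; linarith
          rw [hx't t hti htj]; exact hz t ht
        obtain ⟨x'', h1, h2, h3⟩ := IH _ hsq x' le_rfl hmax' hz'
        exact ⟨x'', by omega, h2, h3⟩
      rcases (by omega : x j + 2 ≤ x i ∨ x i + 2 ≤ x j) with hc | hc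
      · exact key i j hw hc
      · exact key j i hw.symm hc

/-- If player 1 has a `(u,1)`-maximin pure strategy, then he also has one that puts
almost equal numbers of troops (difference at most 1) on battlefields of equal weight. -/
theorem exists_balanced_pure_maximin
    {k : ℕ} (w : Fin k → ℝ) (n m : ℕ) (u : ℝ)
    (h : ∃ x : Fin k → ℕ, (∑ i, x i ≤ n) ∧
        ∀ y : Fin k → ℕ, (∑ i, y i ≤ m) → u ≤ dUtil w x y) :
    ∃ x : Fin k → ℕ, (∑ i, x i ≤ n) ∧
      (∀ y : Fin k → ℕ, (∑ i, y i ≤ m) → u ≤ dUtil w x y) ∧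
      ∀ i j, w i = w j → ((x i : ℤ) - (x j : ℤ)).natAbs ≤ 1 := by
  obtain ⟨x₀, hx₀n, hx₀max⟩ := h
  set x₁ : Fin k → ℕ := fun t => if 0 < w t then x₀ t else 0 with hx₁
  have hle : ∑ t, x₁ t ≤ ∑ t, x₀ t := by
    apply Finset.sum_le_sum
    intro t _
    simp only [hx₁]
    split_ifs <;> omega
  have hmax₁ : ∀ y : Fin k → ℕ, (∑ t, y t ≤ m) → u ≤ dUtil w x₁ y := by
    intro y hy
    refine (hx₀max y hy).trans ?_
    rw [dUtil_eq, dUtil_eq]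
    apply Finset.sum_le_sum
    intro t _
    simp only [hx₁]
    split_ifs with h1 h2 h2 <;> first | rfl | linarith
  have hz₁ : ∀ t, w t ≤ 0 → x₁ t = 0 := by
    intro t ht
    simp only [hx₁, if_neg (not_lt.2 ht)]
  obtain ⟨x', h1, h2, h3⟩ := balance_main w m u (∑ t, (x₁ t)^2) x₁ le_rfl hmax₁ hz₁
  exact ⟨x', by omega, h2, h3⟩
end

section
/- In discrete or continuous Colonel Blotto where battlefield weights are positive integers, if the optimal guaranteed expected utility OPT of a c-strategy (support size ≤ c) mixed strategy of player 1 is positive, then OPT ≥ 1/c. -/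
/-- In discrete Colonel Blotto with positive integer battlefield weights, if the optimal
guaranteed expected utility `OPT` of a `c`-strategy mixed strategy of player 1 is
positive, then `OPT ≥ 1/c`. -/
theorem opt_pos_implies_opt_ge_inv_c
    {k : ℕ} (w : Fin k → ℕ) (hw : ∀ i, 0 < w i) (n m c : ℕ) (hc : 0 < c)
    (hOPT : 0 < sSup {v : ℝ | ∃ (xs : Fin c → (Fin k → ℕ)) (pr : Fin c → ℝ),
        (∀ j, 0 ≤ pr j) ∧ (∑ j, pr j = 1) ∧ (∀ j, ∑ i, xs j i ≤ n) ∧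
        ∀ y : Fin k → ℕ, (∑ i, y i ≤ m) →
          v ≤ ∑ j, pr j *
            ((∑ i ∈ Finset.univ.filter (fun i => y i < xs j i), w i : ℕ) : ℝ)}) :
    (1 : ℝ) / c ≤ sSup {v : ℝ | ∃ (xs : Fin c → (Fin k → ℕ)) (pr : Fin c → ℝ),
        (∀ j, 0 ≤ pr j) ∧ (∑ j, pr j = 1) ∧ (∀ j, ∑ i, xs j i ≤ n) ∧
        ∀ y : Fin k → ℕ, (∑ i, y i ≤ m) →
          v ≤ ∑ j, pr j *
            ((∑ i ∈ Finset.univ.filter (fun i => y i < xs j i), w i : ℕ) : ℝ)} := by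
  set S := {v : ℝ | ∃ (xs : Fin c → (Fin k → ℕ)) (pr : Fin c → ℝ),
        (∀ j, 0 ≤ pr j) ∧ (∑ j, pr j = 1) ∧ (∀ j, ∑ i, xs j i ≤ n) ∧
        ∀ y : Fin k → ℕ, (∑ i, y i ≤ m) →
          v ≤ ∑ j, pr j *
            ((∑ i ∈ Finset.univ.filter (fun i => y i < xs j i), w i : ℕ) : ℝ)} with hS
  have hne : S.Nonempty := by
    by_contra h
    rw [Set.not_nonempty_iff_eq_empty] at h
    rw [h, Real.sSup_empty] at hOPT
    exact lt_irrefl 0 hOPT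
  have hbdd : BddAbove S := by
    by_contra h
    rw [Real.sSup_of_not_bddAbove h] at hOPT
    exact lt_irrefl 0 hOPT
  obtain ⟨v, hvS, hv⟩ := exists_lt_of_lt_csSup hne hOPT
  obtain ⟨xs, pr, hpr0, hpr1, hxs, hmain⟩ := hvS
  -- show 1/c is in S
  have hmem : (1 : ℝ) / c ∈ S := by
    refine ⟨xs, fun _ => 1 / c, fun j => by positivity, ?_, hxs, ?_⟩
    · simp [Finset.sum_const, Finset.card_univ]
      field_simp
    · intro y hy
      have hvy := hmain y hy
      -- some j has payoff ≥ 1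
      have hex : ∃ j : Fin c,
          (1 : ℝ) ≤ ((∑ i ∈ Finset.univ.filter (fun i => y i < xs j i), w i : ℕ) : ℝ) := by
        by_contra hall
        push_neg at hall
        have hzero : ∀ j : Fin c,
            ((∑ i ∈ Finset.univ.filter (fun i => y i < xs j i), w i : ℕ) : ℝ) = 0 := by
          intro j
          have := hall j
          have hnat : (∑ i ∈ Finset.univ.filter (fun i => y i < xs j i), w i) < 1 := by
            exact_mod_cast this
          interval_cases h : (∑ i ∈ Finset.univ.filter (fun i => y i < xs j i), w i)
          simp
        have : v ≤ 0 := by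
          calc v ≤ ∑ j, pr j *
              ((∑ i ∈ Finset.univ.filter (fun i => y i < xs j i), w i : ℕ) : ℝ) := hvy
          _ = 0 := by
            apply Finset.sum_eq_zero
            intro j _
            rw [hzero j, mul_zero]
        linarith
      obtain ⟨j0, hj0⟩ := hex
      have hle : (1 : ℝ) / c * 1 ≤ (1 : ℝ) / c *
          ((∑ i ∈ Finset.univ.filter (fun i => y i < xs j0 i), w i : ℕ) : ℝ) := by
        apply mul_le_mul_of_nonneg_left hj0
        positivity
      calc (1 : ℝ) / c = 1 / c * 1 := by ring
        _ ≤ (1 : ℝ) / c *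
            ((∑ i ∈ Finset.univ.filter (fun i => y i < xs j0 i), w i : ℕ) : ℝ) := hle
        _ ≤ ∑ j, (1 : ℝ) / c *
            ((∑ i ∈ Finset.univ.filter (fun i => y i < xs j i), w i : ℕ) : ℝ) := by
          apply Finset.single_le_sum (f := fun j => (1 : ℝ) / c *
            ((∑ i ∈ Finset.univ.filter (fun i => y i < xs j i), w i : ℕ) : ℝ))
          · intro j _
            positivity
          · exact Finset.mem_univ j0
  exact le_csSup hbdd hmem
end
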